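/- arXiv:2304.03618 — 7 statements merged into one kernel-verified Lean document; each statement's English description precedes it below -/
import Mathlib

section
/- If (a_k) and (a'_k) are semi-arithmetic sequences in ℕ ∪ {∞} with periods m and m' respectively, then the sequence (min{a_k, a'_k})_k is semi-arithmetic with period m·m'. -/
def EvArith (a : ℕ → ℕ∞) (d : ℕ) : Prop :=
  ∃ N : ℕ, ∀ k ≥ N, a (k + 1) = a k + (d : ℕ∞)

/-- Semi-arithmetic with period `m`. -/
def SemiArith (a : ℕ → ℕ∞) (m : ℕ) : Prop :=
  0 < m ∧ ∀ n : ℕ, ∃ d : ℕ, EvArith (fun k => a (m * k + n)) d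

lemma evarith_step {f : ℕ → ℕ∞} {d N : ℕ} (h : ∀ k ≥ N, f (k + 1) = f k + (d : ℕ∞)) :
    ∀ j k, N ≤ k → f (k + j) = f k + ((j * d : ℕ) : ℕ∞) := by
  intro j
  induction j with
  | zero => intro k hk; simp
  | succ j ih =>
    intro k hk
    have h1 : f (k + j + 1) = f (k + j) + (d : ℕ∞) := h (k + j) (by omega)
    have h2 := ih k hk
    have : k + (j + 1) = k + j + 1 := by omega
    rw [this, h1, h2, add_assoc]
    congr 1
    push_cast
    ring

lemma evarith_sub {f : ℕ → ℕ∞} {d : ℕ} (s c : ℕ) (hs : 0 < s) (h : EvArith f d) :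
    EvArith (fun k => f (s * k + c)) (s * d) := by
  obtain ⟨N, hN⟩ := h
  refine ⟨N, fun k hk => ?_⟩
  have key := evarith_step hN s (s * k + c) (by nlinarith)
  show f (s * (k + 1) + c) = f (s * k + c) + ((s * d : ℕ) : ℕ∞)
  have e : s * (k + 1) + c = s * k + c + s := by ring
  rw [e, key, Nat.mul_comm]

lemma nat_min (x y D D' : ℕ) :
    ∃ E J : ℕ, ∀ j ≥ J, min (x + (j + 1) * D) (y + (j + 1) * D')
      = min (x + j * D) (y + j * D') + E := by
  rcases lt_trichotomy D D' with hlt | heq | hgt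
  · refine ⟨D, x, fun j hj => ?_⟩
    have h1 : x + j * D ≤ y + j * D' := by nlinarith
    have h2 : x + (j + 1) * D ≤ y + (j + 1) * D' := by nlinarith
    rw [min_eq_left h1, min_eq_left h2]; ring
  · refine ⟨D, 0, fun j _ => ?_⟩
    subst heq
    have : ∀ z : ℕ, z + (j + 1) * D = z + j * D + D := fun z => by ring
    rw [this, this, min_add_add_right]
  · refine ⟨D', y, fun j hj => ?_⟩
    have h1 : y + j * D' ≤ x + j * D := by nlinarith
    have h2 : y + (j + 1) * D' ≤ x + (j + 1) * D := by nlinarith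
    rw [min_eq_right h1, min_eq_right h2]; ring

lemma evarith_top {f : ℕ → ℕ∞} {d N : ℕ} (h : ∀ k ≥ N, f (k + 1) = f k + (d : ℕ∞))
    (htop : f N = ⊤) : ∀ k ≥ N, f k = ⊤ := by
  intro k hk
  obtain ⟨j, rfl⟩ := Nat.exists_eq_add_of_le hk
  rw [evarith_step h j N le_rfl, htop, top_add]

lemma min_evarith {f g : ℕ → ℕ∞} {D D' : ℕ} (hf : EvArith f D) (hg : EvArith g D') :
    ∃ E, EvArith (fun k => min (f k) (g k)) E := by
  obtain ⟨N, hN⟩ := hf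
  obtain ⟨N', hN'⟩ := hg
  set N₀ := max N N' with hN₀
  have hN₁ : N ≤ N₀ := le_max_left _ _
  have hN₂ : N' ≤ N₀ := le_max_right _ _
  by_cases hft : f N₀ = ⊤
  · -- f is eventually ⊤, min = g
    have hfa : ∀ k ≥ N₀, f k = ⊤ := by
      intro k hk
      exact evarith_top (N := N₀) (fun k hk => hN k (le_trans hN₁ hk)) hft k hk
    refine ⟨D', N₀, fun k hk => ?_⟩
    simp only [hfa k hk, hfa (k + 1) (by omega), top_add, min_eq_right le_top,
      hN' k (le_trans hN₂ hk)]
  by_cases hgt : g N₀ = ⊤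
  · have hga : ∀ k ≥ N₀, g k = ⊤ := by
      intro k hk
      exact evarith_top (N := N₀) (fun k hk => hN' k (le_trans hN₂ hk)) hgt k hk
    refine ⟨D, N₀, fun k hk => ?_⟩
    simp only [hga k hk, hga (k + 1) (by omega), min_eq_left le_top,
      hN k (le_trans hN₁ hk)]
  · -- both finite
    lift f N₀ to ℕ using hft with x hx
    lift g N₀ to ℕ using hgt with y hy
    have hfj : ∀ j, f (N₀ + j) = ((x + j * D : ℕ) : ℕ∞) := by
      intro j
      rw [evarith_step (fun k hk => hN k (le_trans hN₁ hk)) j N₀ le_rfl, ← hx]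
      push_cast; ring
    have hgj : ∀ j, g (N₀ + j) = ((y + j * D' : ℕ) : ℕ∞) := by
      intro j
      rw [evarith_step (fun k hk => hN' k (le_trans hN₂ hk)) j N₀ le_rfl, ← hy]
      push_cast; ring
    obtain ⟨E, J, hEJ⟩ := nat_min x y D D'
    refine ⟨E, N₀ + J, fun k hk => ?_⟩
    obtain ⟨j, rfl⟩ : ∃ j, k = N₀ + j := ⟨k - N₀, by omega⟩
    have hj : J ≤ j := by omega
    have e1 : N₀ + j + 1 = N₀ + (j + 1) := by omega
    show min (f (N₀ + j + 1)) (g (N₀ + j + 1)) = min (f (N₀ + j)) (g (N₀ + j)) + (E : ℕ∞)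
    rw [e1, hfj, hgj, hfj, hgj, ← Nat.mono_cast.map_min (f := fun z : ℕ => (z : ℕ∞)),
      ← Nat.mono_cast.map_min (f := fun z : ℕ => (z : ℕ∞)), hEJ j hj]
    push_cast
    ring

theorem stmt_1 (a a' : ℕ → ℕ∞) (m m' : ℕ)
    (h : SemiArith a m) (h' : SemiArith a' m') :
    SemiArith (fun k => min (a k) (a' k)) (m * m') := by
  obtain ⟨hm, ha⟩ := h
  obtain ⟨hm', ha'⟩ := h'
  refine ⟨Nat.mul_pos hm hm', fun n => ?_⟩
  obtain ⟨d, hd⟩ := ha (n % m)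
  obtain ⟨d', hd'⟩ := ha' (n % m')
  have heq : ∀ k, m * (m' * k + n / m) + n % m = m * m' * k + n := by
    intro k
    rw [Nat.mul_add, ← Nat.mul_assoc, Nat.add_assoc, Nat.div_add_mod]
  have heq' : ∀ k, m' * (m * k + n / m') + n % m' = m * m' * k + n := by
    intro k
    rw [Nat.mul_add, ← Nat.mul_assoc, Nat.mul_comm m' m, Nat.add_assoc, Nat.div_add_mod]
  have key : EvArith (fun k => a (m * m' * k + n)) (m' * d) := by
    have := evarith_sub m' (n / m) hm' hd
    simpa only [heq] using this
  have key' : EvArith (fun k => a' (m * m' * k + n)) (m * d') := by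
    have := evarith_sub m (n / m') hm hd'
    simpa only [heq'] using this
  obtain ⟨E, hE⟩ := min_evarith key key'
  exact ⟨E, hE⟩
end

section
/- Let (a_k) be an eventually finite uniformly semi-arithmetic sequence with period m > 0 and difference d ≥ 0. Then the limit of a_k / k as k → ∞ exists and equals d/m. -/
/-- Uniformly semi-arithmetic with period `m` and difference `d`. -/
def UnifSemiArith (a : ℕ → ℕ∞) (m d : ℕ) : Prop :=
  ∀ n : ℕ, EvArith (fun k => a (m * k + n)) d

lemma stmt2_aux (a : ℕ → ℕ∞) (m d : ℕ) (hm : 0 < m)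
    (hfin : ∃ N : ℕ, ∀ k ≥ N, a k ≠ ⊤) (n : ℕ)
    (h : EvArith (fun k => a (m * k + n)) d) :
    ∃ N : ℕ, ∃ c : ℝ, ∀ k ≥ N, ((a (m * k + n)).toNat : ℝ) = d * k + c := by
  obtain ⟨N1, h1⟩ := h
  obtain ⟨Nf, hf⟩ := hfin
  set N := max N1 Nf with hN
  have hbase : a (m * N + n) ≠ ⊤ := by
    apply hf
    calc Nf ≤ N := le_max_right _ _
      _ ≤ m * N := Nat.le_mul_of_pos_left _ hm
      _ ≤ m * N + n := Nat.le_add_right _ _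
  set b := (a (m * N + n)).toNat with hb
  have hbase' : a (m * N + n) = (b : ℕ∞) := (ENat.coe_toNat hbase).symm
  have key : ∀ k, N ≤ k → a (m * k + n) = ((b + d * (k - N) : ℕ) : ℕ∞) := by
    intro k hk
    induction k, hk using Nat.le_induction with
    | base => simp [hbase', Nat.sub_self]
    | succ k hk ih =>
      have h2 := h1 k (le_trans (le_max_left _ _) hk)
      simp only at h2
      rw [h2, ih]
      have h3 : k + 1 - N = (k - N) + 1 := by omega
      rw [h3]
      push_cast
      ring
  refine ⟨N, (b : ℝ) - d * N, fun k hk => ?_⟩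
  rw [key k hk, ENat.toNat_coe]
  push_cast [Nat.cast_sub hk]
  ring

theorem stmt_2 (a : ℕ → ℕ∞) (m d : ℕ) (hm : 0 < m)
    (hfin : ∃ N : ℕ, ∀ k ≥ N, a k ≠ ⊤)
    (h : UnifSemiArith a m d) :
    Filter.Tendsto (fun k : ℕ => ((a k).toNat : ℝ) / (k : ℝ))
      Filter.atTop (nhds ((d : ℝ) / (m : ℝ))) := by
  choose N c hc using fun n => stmt2_aux a m d hm hfin n (h n)
  set M := (Finset.range m).sup N with hM
  rw [tendsto_iff_dist_tendsto_zero]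
  set B : ℝ := ∑ r ∈ Finset.range m, |(m : ℝ) * c r - d * r| with hB
  have hBnn : 0 ≤ B := Finset.sum_nonneg fun i _ => abs_nonneg _
  apply squeeze_zero' (Filter.Eventually.of_forall fun k => dist_nonneg)
    ?_ (tendsto_const_div_atTop_nhds_zero_nat B)
  filter_upwards [Filter.eventually_ge_atTop (m * (M + 1))] with k hk
  have hk0 : 0 < k := lt_of_lt_of_le (by positivity) hk
  set q := k / m with hq
  set r := k % m with hr'
  have hr : r < m := Nat.mod_lt _ hm
  have hqM : N r ≤ q := by
    have h1 : M + 1 ≤ q := (Nat.le_div_iff_mul_le hm).mpr (by linarith [Nat.mul_comm m (M+1)])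
    have h2 : N r ≤ M := Finset.le_sup (Finset.mem_range.mpr hr)
    omega
  have hkeq : m * q + r = k := Nat.div_add_mod k m
  have hval : ((a k).toNat : ℝ) = d * q + c r := by
    rw [← hkeq]; exact hc r q hqM
  have hkR : (k : ℝ) = m * q + r := by exact_mod_cast hkeq.symm
  have hkpos : (0 : ℝ) < k := by exact_mod_cast hk0
  have hmpos : (0 : ℝ) < m := by exact_mod_cast hm
  rw [Real.dist_eq, hval]
  have heq : ((d : ℝ) * q + c r) / k - d / m = ((m : ℝ) * c r - d * r) / (k * m) := by
    rw [div_sub_div _ _ hkpos.ne' hmpos.ne']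
    congr 1
    rw [hkR]; ring
  rw [heq, abs_div, abs_of_pos (by positivity : (0:ℝ) < k * m)]
  have hle : |(m : ℝ) * c r - d * r| ≤ B :=
    Finset.single_le_sum (f := fun i => |(m : ℝ) * c i - d * i|)
      (fun i _ => abs_nonneg _) (Finset.mem_range.mpr hr)
  calc |(m : ℝ) * c r - d * r| / (k * m) ≤ B / (k * m) := by
        apply div_le_div_of_nonneg_right hle (by positivity) |>.trans_eq rfl
      _ ≤ B / k := by
        have hm1 : (1:ℝ) ≤ m := by exact_mod_cast hm
        exact div_le_div_of_nonneg_left hBnn hkpos (le_mul_of_one_le_right hkpos.le hm1)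
end

section
/- Let x_1, ..., x_n be natural numbers with g = gcd(x_1, ..., x_n). Then there exists N ≥ 0 such that for all k ≥ N with g dividing k, there exist λ_1, ..., λ_n ∈ ℕ with k = Σ_i λ_i x_i. -/
theorem Nat.setGcd_image_finset {ι : Type*} (s : Finset ι) (f : ι → ℕ) :
    setGcd (f '' s) = s.gcd f :=
  dvd_antisymm
    (Finset.dvd_gcd fun i hi ↦ setGcd_dvd_of_mem ⟨i, hi, rfl⟩)
    (dvd_setGcd_iff.mpr <| by
      rintro _ ⟨i, hi, rfl⟩
      exact Finset.gcd_dvd hi)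

theorem Nat.setGcd_range {ι : Type*} [Fintype ι] (f : ι → ℕ) :
    setGcd (Set.range f) = Finset.univ.gcd f := by
  rw [← setGcd_image_finset Finset.univ f, Finset.coe_univ, Set.image_univ]

theorem stmt_5 (n : ℕ) (x : Fin n → ℕ) (g : ℕ)
    (hg : g = Finset.univ.gcd x) :
    ∃ N : ℕ, ∀ k ≥ N, g ∣ k →
      ∃ lam : Fin n → ℕ, k = ∑ i, lam i * x i := by
  obtain ⟨N, hN⟩ := Nat.exists_mem_closure_of_ge (Set.range x)
  refine ⟨N, fun k hk hdvd ↦ ?_⟩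
  rw [Nat.setGcd_range, ← hg] at hN
  simpa only [smul_eq_mul] using AddSubmonoid.mem_closure_range_iff_of_fintype.mp (hN k hk hdvd)
end

section
/- Let Ω ⊆ ℕ² be the submonoid generated by a finite set V ⊆ ℕ². Then the lower envelope Env(Ω) = (inf { ℓ : (k, ℓ) ∈ Ω })_k is a uniformly semi-arithmetic sequence in ℕ ∪ {∞}. -/
/-!
Generators with first coordinate `0` only affect column `0`, so assume some generator has
positive first coordinate and let `P` be the product of all such first coordinates. Each such
`w` yields `(P / w.1) • w = (P, P / w.1 * w.2) ∈ Ω`; let `d` be the least of these heights.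
Adding `(P, d)` gives `Env (k + P) ≤ Env k + d`. Conversely, a point of `Ω` in column
`k + P ≥ (#V + 1) P` is a sum of generators in which, by pigeonhole, some `w` occurs at least
`P / w.1` times; removing those copies lands in column `k` and lowers the height by at least
`d`. Hence `Env (k + P) = Env k + d` for all large `k`.
-/

noncomputable def Env (Ω : Set (ℕ × ℕ)) (k : ℕ) : ℕ∞ :=
  sInf {x : ℕ∞ | ∃ ℓ : ℕ, (k, ℓ) ∈ Ω ∧ x = (ℓ : ℕ∞)}

theorem Finset.exists_ne_zero_and_le_of_sum_tsub_one_mul_lt {ι : Type*} {s : Finset ι}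
    {a c f : ι → ℕ} (h : ∑ i ∈ s, (c i - 1) * a i < ∑ i ∈ s, f i * a i) :
    ∃ i ∈ s, a i ≠ 0 ∧ c i ≤ f i := by
  by_contra! hlt
  refine h.not_ge (Finset.sum_le_sum fun i hi => ?_)
  rcases eq_or_ne (a i) 0 with h0 | h0
  · simp [h0]
  · exact Nat.mul_le_mul_right _ (Nat.le_sub_one_of_lt (hlt i hi h0))

namespace AddSubmonoid

theorem exists_nsmul_add_of_mem_closure {M : Type*} [AddCommMonoid M] {V : Finset M}
    (φ : M →+ ℕ) (c : M → ℕ) {x : M} (hx : x ∈ closure (V : Set M))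
    (h : ∑ v ∈ V, (c v - 1) * φ v < φ x) :
    ∃ v ∈ V, φ v ≠ 0 ∧ ∃ y ∈ closure (V : Set M), x = c v • v + y := by
  classical
  obtain ⟨f, -, rfl⟩ := mem_closure_finset.1 hx
  simp only [map_sum, map_nsmul, smul_eq_mul] at h
  obtain ⟨w, hw, hφw, hcw⟩ := Finset.exists_ne_zero_and_le_of_sum_tsub_one_mul_lt h
  refine ⟨w, hw, hφw, (f w - c w) • w + ∑ v ∈ V.erase w, f v • v, ?_, ?_⟩
  · exact add_mem (nsmul_mem (subset_closure hw) _)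
      (sum_mem _ fun v hv => nsmul_mem (subset_closure (Finset.mem_of_mem_erase hv)) _)
  · rw [← add_assoc, ← add_nsmul, Nat.add_sub_cancel' hcw,
      Finset.add_sum_erase V (fun v => f v • v) hw]

end AddSubmonoid

section Env

variable {Ω : Set (ℕ × ℕ)} {k ℓ : ℕ}

theorem env_le_of_mem (h : (k, ℓ) ∈ Ω) : Env Ω k ≤ ℓ :=
  sInf_le ⟨ℓ, h, rfl⟩

theorem le_env_iff {x : ℕ∞} : x ≤ Env Ω k ↔ ∀ ℓ : ℕ, (k, ℓ) ∈ Ω → x ≤ ℓ := by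
  rw [Env, le_sInf_iff]
  exact ⟨fun h ℓ hℓ => h _ ⟨ℓ, hℓ, rfl⟩, fun h _ ⟨ℓ, hℓ, hx⟩ => hx ▸ h ℓ hℓ⟩

theorem env_eq_top_iff : Env Ω k = ⊤ ↔ ∀ ℓ : ℕ, (k, ℓ) ∉ Ω := by
  rw [← top_le_iff, le_env_iff]
  simp

theorem exists_mem_env_eq (h : Env Ω k ≠ ⊤) : ∃ ℓ : ℕ, (k, ℓ) ∈ Ω ∧ Env Ω k = ℓ := by
  have hne : {x : ℕ∞ | ∃ ℓ : ℕ, (k, ℓ) ∈ Ω ∧ x = ℓ}.Nonempty := by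
    obtain ⟨ℓ, hℓ⟩ := not_forall_not.1 (mt env_eq_top_iff.2 h)
    exact ⟨ℓ, ℓ, hℓ, rfl⟩
  obtain ⟨ℓ, hℓ, hEq⟩ := csInf_mem hne
  exact ⟨ℓ, hℓ, hEq⟩

theorem env_eq_env_add {k' d : ℕ} (hup : ∀ ℓ, (k, ℓ) ∈ Ω → (k', ℓ + d) ∈ Ω)
    (hdown : ∀ ℓ, (k', ℓ) ∈ Ω → ∃ ℓ', (k, ℓ') ∈ Ω ∧ ℓ' + d ≤ ℓ) :
    Env Ω k' = Env Ω k + d := by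
  refine le_antisymm ?_ (le_env_iff.2 fun ℓ hℓ => ?_)
  · by_cases htop : Env Ω k = ⊤
    · simp [htop]
    obtain ⟨ℓ, hℓ, hEq⟩ := exists_mem_env_eq htop
    rw [hEq]
    exact_mod_cast env_le_of_mem (hup ℓ hℓ)
  · obtain ⟨ℓ', hℓ', hle⟩ := hdown ℓ hℓ
    calc Env Ω k + d ≤ ℓ' + d := by gcongr; exact env_le_of_mem hℓ'
      _ ≤ ℓ := by exact_mod_cast hle

end Env

theorem unifSemiArith_of_add_eq {a : ℕ → ℕ∞} {m d N : ℕ} (hm : 0 < m)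
    (h : ∀ k ≥ N, a (k + m) = a k + d) : UnifSemiArith a m d :=
  fun n => ⟨N, fun k hk => by
    show a (m * (k + 1) + n) = a (m * k + n) + d
    rw [mul_add_one, add_right_comm]
    exact h _ (le_add_right (hk.trans (Nat.le_mul_of_pos_left k hm)))⟩

section Closure

variable {V : Finset (ℕ × ℕ)}

theorem env_closure_eq_top_of_forall_fst_eq_zero (hV : ∀ v ∈ V, v.1 = 0) {k : ℕ} (hk : k ≠ 0) :
    Env (AddSubmonoid.closure (V : Set (ℕ × ℕ))) k = ⊤ := by
  have hle : AddSubmonoid.closure (V : Set (ℕ × ℕ)) ≤ AddMonoidHom.mker (AddMonoidHom.fst ℕ ℕ) :=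
    AddSubmonoid.closure_le.2 fun v hv => hV v hv
  exact env_eq_top_iff.2 fun ℓ hℓ => hk (hle hℓ)

theorem env_closure_add_eq {P d : ℕ} (hP : 0 < P) (hdvd : ∀ v ∈ V, v.1 ≠ 0 → v.1 ∣ P)
    (hd : ∀ v ∈ V, v.1 ≠ 0 → d ≤ P / v.1 * v.2)
    (hPd : (P, d) ∈ AddSubmonoid.closure (V : Set (ℕ × ℕ)))
    {k : ℕ} (hk : V.card * P ≤ k) :
    Env (AddSubmonoid.closure (V : Set (ℕ × ℕ))) (k + P) =
      Env (AddSubmonoid.closure (V : Set (ℕ × ℕ))) k + d := by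
  refine env_eq_env_add (fun ℓ hℓ => (add_mem hℓ hPd : (k, ℓ) + (P, d) ∈ _)) fun ℓ hℓ => ?_
  have hsmall : ∑ v ∈ V, (P / v.1 - 1) * v.1 < k + P := calc
    ∑ v ∈ V, (P / v.1 - 1) * v.1 ≤ ∑ _v ∈ V, P := Finset.sum_le_sum fun v _ =>
        (Nat.mul_le_mul_right _ (Nat.sub_le _ _)).trans (Nat.div_mul_le_self _ _)
    _ = V.card * P := by rw [Finset.sum_const, smul_eq_mul]
    _ < k + P := by omega
  obtain ⟨w, hw, hw0, y, hy, hxy⟩ :=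
    AddSubmonoid.exists_nsmul_add_of_mem_closure (AddMonoidHom.fst ℕ ℕ) (fun v => P / v.1) hℓ hsmall
  have hfst : k + P = P + y.1 := by
    simpa [Nat.div_mul_cancel (hdvd w hw hw0)] using congrArg Prod.fst hxy
  have hsnd : ℓ = P / w.1 * w.2 + y.2 := by simpa using congrArg Prod.snd hxy
  refine ⟨y.2, ?_, ?_⟩
  · have : y = (k, y.2) := Prod.ext (by omega) rfl
    exact this ▸ hy
  · have := hd w hw hw0
    omega

theorem exists_env_closure_add_eq (hV : ∃ v ∈ V, v.1 ≠ 0) :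
    ∃ P d : ℕ, 0 < P ∧ ∀ k ≥ V.card * P,
      Env (AddSubmonoid.closure (V : Set (ℕ × ℕ))) (k + P) =
      Env (AddSubmonoid.closure (V : Set (ℕ × ℕ))) k + d := by
  classical
  set F := V.filter (·.1 ≠ 0)
  have hF : F.Nonempty := by simpa [F, Finset.filter_nonempty_iff] using hV
  set P := ∏ u ∈ F, u.1
  have hP : 0 < P := Finset.prod_pos fun u hu => Nat.pos_of_ne_zero (Finset.mem_filter.1 hu).2
  have hdvd : ∀ v ∈ V, v.1 ≠ 0 → v.1 ∣ P := fun v hv hv0 =>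
    Finset.dvd_prod_of_mem _ (Finset.mem_filter.2 ⟨hv, hv0⟩)
  obtain ⟨w, hwF, hmin⟩ := F.exists_min_image (fun v => P / v.1 * v.2) hF
  obtain ⟨hw, hw0⟩ := Finset.mem_filter.1 hwF
  have hPd : (P, P / w.1 * w.2) ∈ AddSubmonoid.closure (V : Set (ℕ × ℕ)) := by
    have hsmul : (P / w.1) • w = (P, P / w.1 * w.2) :=
      Prod.ext (Nat.div_mul_cancel (hdvd w hw hw0)) rfl
    exact hsmul ▸ nsmul_mem (AddSubmonoid.subset_closure hw) _
  exact ⟨P, _, hP, fun k hk => env_closure_add_eq hP hdvd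
    (fun v hv hv0 => hmin v (Finset.mem_filter.2 ⟨hv, hv0⟩)) hPd hk⟩

end Closure

theorem stmt_6 (V : Finset (ℕ × ℕ)) :
    ∃ m d : ℕ, 0 < m ∧
      UnifSemiArith (Env (AddSubmonoid.closure (V : Set (ℕ × ℕ)) : Set (ℕ × ℕ))) m d := by
  by_cases hV : ∃ v ∈ V, v.1 ≠ 0
  · obtain ⟨P, d, hP, hper⟩ := exists_env_closure_add_eq hV
    exact ⟨P, d, hP, unifSemiArith_of_add_eq hP hper⟩
  · push Not at hV
    refine ⟨1, 0, one_pos, unifSemiArith_of_add_eq one_pos (N := 1) fun k hk => ?_⟩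
    rw [env_closure_eq_top_of_forall_fst_eq_zero hV (k := k + 1) (by omega),
      env_closure_eq_top_of_forall_fst_eq_zero hV (k := k) (by omega), top_add]
end

section
/- In the free group F = ⟨a, b⟩ with S = {a^{±1}, b^{±1}}, the conjugation-invariant word norm of [a,b]^k satisfies ‖[a,b]^k‖_S = 2⌊k/2⌋ + 2 for all k ≥ 1; consequently the stable length lim_k ‖[a,b]^k‖_S / k equals 1. -/
/-!
Upper bound: deleting from `(a b a⁻¹ b⁻¹)^(2m+1)` the first `a`, the `b⁻¹` of each of the first
`m` blocks, the `a⁻¹` of block `m+1` and the `b` of each of the last `m` blocks leaves a word that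
freely reduces to `1`, so `[a,b]^(2m+1)` is a product of `2m+2` conjugates of generators; one more
commutator (two conjugates) handles even powers.

Lower bound: every conjugate of a generator has odd exponent sum, so the length is even. Moreover
`F` acts on `ℝ` by lifts of circle homeomorphisms in which `a` and `b` act with fixed points, and
`[a,b]` moves `0` by at least `1`. A lift with a fixed point moves `0` by less than `1`, and
`(f * g) 0 ≤ f 0 + ⌈g 0⌉`, so a product of `ℓ` conjugates of generators moves `0` by less than
`ℓ`, while `[a,b]^k` moves it by at least `k`. Hence `ℓ ≥ k + 1`, and by parity
`ℓ ≥ 2⌊k/2⌋ + 2`.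
-/

/-- The conjugation-invariant word norm associated with a normally generating
set `S`: the least `ℓ` such that `g` is a product of `ℓ` conjugates of
elements of `S`. -/
noncomputable def cinorm {G : Type*} [Group G] (S : Set G) (g : G) : ℕ :=
  sInf {ℓ : ℕ | ∃ f : Fin ℓ → G,
    (∀ i, ∃ h s, s ∈ S ∧ f i = h * s * h⁻¹) ∧ (List.ofFn f).prod = g}

open Function Set Filter Topology Group
open scoped Pointwise commutatorElement

section ConjugatesPow

variable {G : Type*} [Group G] {S : Set G}

theorem cinorm_eq_sInf (g : G) : cinorm S g = sInf {ℓ | g ∈ conjugatesOfSet S ^ ℓ} := by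
  unfold cinorm
  congr 1
  ext ℓ
  simp only [Set.mem_pow]
  constructor
  · rintro ⟨f, hf, rfl⟩
    refine ⟨fun i => ⟨f i, ?_⟩, rfl⟩
    obtain ⟨h, s, hs, hfi⟩ := hf i
    exact mem_conjugatesOfSet_iff.2 ⟨s, hs, isConj_iff.2 ⟨h, hfi.symm⟩⟩
  · rintro ⟨f, rfl⟩
    refine ⟨fun i => f i, fun i => ?_, rfl⟩
    obtain ⟨s, hs, hsf⟩ := mem_conjugatesOfSet_iff.1 (f i).2
    obtain ⟨h, hf⟩ := isConj_iff.1 hsf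
    exact ⟨h, s, hs, hf.symm⟩

theorem cinorm_eq_of_isLeast {g : G} {n : ℕ}
    (h : IsLeast {ℓ | g ∈ conjugatesOfSet S ^ ℓ} n) : cinorm S g = n := by
  rw [cinorm_eq_sInf, h.csInf_eq]

theorem mul_pow_mul_inv_pow_mem_pow {h : G} (hh : h ∈ conjugatesOfSet S) (s : G) (m : ℕ) :
    (s * h) ^ m * (s ^ m)⁻¹ ∈ conjugatesOfSet S ^ m := by
  induction m with
  | zero => simp
  | succ m ih =>
    have key : (s * h) ^ (m + 1) * (s ^ (m + 1))⁻¹ =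
        ((s * h) ^ m * (s ^ m)⁻¹) * (s ^ (m + 1) * h * (s ^ (m + 1))⁻¹) := by
      rw [pow_succ, pow_succ]
      group
    rw [key, pow_succ]
    exact Set.mul_mem_mul ih (conj_mem_conjugatesOfSet hh)

theorem pow_mul_mul_inv_pow_mem_pow {h : G} (hh : h ∈ conjugatesOfSet S) (s : G) (m : ℕ) :
    s ^ m * (h * s⁻¹) ^ m ∈ conjugatesOfSet S ^ m := by
  induction m with
  | zero => simp
  | succ m ih =>
    have key : s ^ (m + 1) * (h * s⁻¹) ^ (m + 1) =
        (s ^ (m + 1) * h * (s ^ (m + 1))⁻¹) * (s ^ m * (h * s⁻¹) ^ m) := by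
      rw [pow_succ' (h * s⁻¹) m]
      generalize (h * s⁻¹) ^ m = P
      group
    rw [key, pow_succ']
    exact Set.mul_mem_mul (conj_mem_conjugatesOfSet hh) ih

theorem commutator_pow_two_mul_add_one_mem_pow {x y : G} (hx : x ∈ S) (hx' : x⁻¹ ∈ S)
    (hy : y ∈ S) (hy' : y⁻¹ ∈ S) (m : ℕ) :
    ⁅x, y⁆ ^ (2 * m + 1) ∈ conjugatesOfSet S ^ (2 * m + 2) := by
  have hconj : ∀ {s}, s ∈ S → ∀ g : G, g * s * g⁻¹ ∈ conjugatesOfSet S :=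
    fun hs g => conj_mem_conjugatesOfSet (subset_conjugatesOfSet hs)
  have hsemi : SemiconjBy x (y * (x⁻¹ * y⁻¹ * x⁻¹⁻¹)) ⁅x, y⁆ := by
    simp only [SemiconjBy, commutatorElement_def]
    group
  -- the four factors group the conjugates left by the deletions described in the header
  have hsplit : ⁅x, y⁆ ^ (2 * m + 1) = x * ((y * (x⁻¹ * y⁻¹ * x⁻¹⁻¹)) ^ m * (y ^ m)⁻¹) *
      (y ^ (m + 1) * x⁻¹ * (y ^ (m + 1))⁻¹) * (y ^ m * (x * y * x⁻¹ * y⁻¹) ^ m) := by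
    rw [← mul_assoc x, (hsemi.pow_right m).eq, ← commutatorElement_def,
      show 2 * m + 1 = m + 1 + m by ring, pow_add, pow_succ, commutatorElement_def x y]
    group
  rw [hsplit, show 2 * m + 2 = 1 + m + 1 + m by ring, pow_add, pow_add, pow_add, pow_one]
  exact Set.mul_mem_mul (Set.mul_mem_mul (Set.mul_mem_mul (subset_conjugatesOfSet hx)
    (mul_pow_mul_inv_pow_mem_pow (hconj hy' _) y m)) (hconj hx' _))
    (pow_mul_mul_inv_pow_mem_pow (hconj hy x) y m)

theorem commutator_pow_mem_pow {x y : G} (hx : x ∈ S) (hx' : x⁻¹ ∈ S)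
    (hy : y ∈ S) (hy' : y⁻¹ ∈ S) {k : ℕ} (hk : 1 ≤ k) :
    ⁅x, y⁆ ^ k ∈ conjugatesOfSet S ^ (2 * (k / 2) + 2) := by
  have hodd := commutator_pow_two_mul_add_one_mem_pow hx hx' hy hy'
  obtain ⟨m, rfl | rfl⟩ := Nat.even_or_odd' k
  · obtain ⟨j, rfl⟩ : ∃ j, m = j + 1 := ⟨m - 1, by omega⟩
    have h := Set.mul_mem_mul (hodd j) (hodd 0)
    rw [← pow_add, ← pow_add] at h
    convert h using 2 <;> omega
  · rw [show (2 * m + 1) / 2 = m by omega]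
    exact hodd m

theorem map_eq_pow_of_mem_pow {M : Type*} [CommGroup M] (φ : G →* M) {m : M}
    (hS : ∀ s ∈ S, φ s = m) {n : ℕ} {g : G} (hg : g ∈ conjugatesOfSet S ^ n) : φ g = m ^ n := by
  induction n generalizing g with
  | zero => simp_all
  | succ n ih =>
    rw [pow_succ] at hg
    obtain ⟨u, hu, t, ht, rfl⟩ := Set.mem_mul.1 hg
    obtain ⟨s, hs, hst⟩ := mem_conjugatesOfSet_iff.1 ht
    obtain ⟨c, rfl⟩ := isConj_iff.1 hst
    simp [ih hu, hS s hs, pow_succ]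

end ConjugatesPow

theorem AddCircle.lipschitzWith_norm_coe (p : ℝ) :
    LipschitzWith 1 fun x : ℝ => ‖(x : AddCircle p)‖ := by
  refine LipschitzWith.of_dist_le_mul fun x y => ?_
  rw [NNReal.coe_one, one_mul, Real.dist_eq, Real.dist_eq]
  calc |‖(x : AddCircle p)‖ - ‖(y : AddCircle p)‖| ≤ ‖((x - y : ℝ) : AddCircle p)‖ := by
        rw [AddCircle.coe_sub]; exact abs_norm_sub_norm_le _ _
    _ ≤ |x - y| := QuotientAddGroup.norm_mk_le_norm

theorem strictMono_add_of_lipschitzWith {ψ : ℝ → ℝ} {K : NNReal} (hψ : LipschitzWith K ψ)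
    (hK : K < 1) : StrictMono fun x => x + ψ x := by
  intro x y hxy
  have hdist := hψ.dist_le_mul y x
  rw [Real.dist_eq, Real.dist_eq, abs_of_pos (sub_pos.2 hxy)] at hdist
  have hK' : (K : ℝ) * (y - x) < y - x := mul_lt_of_lt_one_left (sub_pos.2 hxy) hK
  linarith [neg_abs_le (ψ y - ψ x)]

namespace CircleDeg1Lift

def addPeriodic (ψ : ℝ → ℝ) (hper : Periodic ψ 1) {K : NNReal} (hψ : LipschitzWith K ψ)
    (hK : K < 1) : CircleDeg1Lift where
  toFun x := x + ψ x
  monotone' := (strictMono_add_of_lipschitzWith hψ hK).monotone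
  map_add_one' x := by simp only [hper x]; ring

@[simp]
theorem addPeriodic_apply (ψ : ℝ → ℝ) (hper : Periodic ψ 1) {K : NNReal}
    (hψ : LipschitzWith K ψ) (hK : K < 1) (x : ℝ) : addPeriodic ψ hper hψ hK x = x + ψ x :=
  rfl

theorem isUnit_addPeriodic (ψ : ℝ → ℝ) (hper : Periodic ψ 1) {K : NNReal}
    (hψ : LipschitzWith K ψ) (hK : K < 1) : IsUnit (addPeriodic ψ hper hψ hK) :=
  isUnit_iff_bijective.2 ⟨(strictMono_add_of_lipschitzWith hψ hK).injective,
    (continuous_iff_surjective _).1 (continuous_id.add hψ.continuous)⟩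

theorem map_zero_lt_one_of_map_eq (f : CircleDeg1Lift) {x : ℝ} (hx : f x = x) : f 0 < 1 :=
  calc f 0 ≤ f (Int.fract x) := f.mono (Int.fract_nonneg x)
    _ = Int.fract x := by linarith [f.map_fract_sub_fract_eq x]
    _ < 1 := Int.fract_lt_one x

theorem mul_map_zero_lt (f g : CircleDeg1Lift) {a : ℝ} {n : ℤ} (hf : f 0 < a) (hg : g 0 < n) :
    (f * g) 0 < a + n :=
  calc (f * g) 0 ≤ f 0 + ⌈g 0⌉ := f.map_le_of_map_zero (g 0)
    _ ≤ f 0 + n := by gcongr; exact_mod_cast Int.ceil_le.2 hg.le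
    _ < a + n := by linarith

theorem le_units_inv_apply_iff (u : CircleDeg1Liftˣ) {x y : ℝ} :
    x ≤ (↑u⁻¹ : CircleDeg1Lift) y ↔ u x ≤ y := by
  rw [← coe_toOrderIso_symm, OrderIso.le_symm_apply, coe_toOrderIso]

theorem units_inv_apply_eq_of_apply_eq (u : CircleDeg1Liftˣ) {x : ℝ} (hx : u x = x) :
    (↑u⁻¹ : CircleDeg1Lift) x = x := by
  conv_lhs => rw [← hx]
  exact units_inv_apply_apply u x

theorem map_zero_lt_of_mem_pow {G : Type*} [Group G] {S : Set G} (φ : G →* CircleDeg1Liftˣ)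
    (hS : ∀ s ∈ S, ∃ x, (φ s : CircleDeg1Lift) x = x) {n : ℕ} {g : G}
    (hg : g ∈ conjugatesOfSet S ^ (n + 1)) : (φ g : CircleDeg1Lift) 0 < n + 1 := by
  have hT : ∀ t ∈ conjugatesOfSet S, (φ t : CircleDeg1Lift) 0 < 1 := by
    intro t ht
    obtain ⟨s, hs, hst⟩ := mem_conjugatesOfSet_iff.1 ht
    obtain ⟨c, rfl⟩ := isConj_iff.1 hst
    obtain ⟨x, hx⟩ := hS s hs
    refine map_zero_lt_one_of_map_eq _ (x := (φ c : CircleDeg1Lift) x) ?_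
    simp only [map_mul, map_inv, Units.val_mul, mul_apply, units_inv_apply_apply, hx]
  induction n generalizing g with
  | zero => simpa using hT g (by simpa using hg)
  | succ n ih =>
    rw [pow_succ] at hg
    obtain ⟨u, hu, t, ht, rfl⟩ := Set.mem_mul.1 hg
    rw [map_mul, Units.val_mul]
    simpa using mul_map_zero_lt _ _ (ih hu) (n := 1) (by simpa using hT t ht)

end CircleDeg1Lift

namespace CommutatorNorm

open CircleDeg1Lift

noncomputable def bump (x : ℝ) : ℝ := 3 / 4 * (‖((x - 3 / 8 : ℝ) : UnitAddCircle)‖ - 1 / 4)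

theorem periodic_bump : Periodic bump 1 := fun x => by
  rw [bump, show x + 1 - 3 / 8 = x - 3 / 8 + 1 by ring, AddCircle.coe_add, AddCircle.coe_period,
    add_zero, bump]

theorem lipschitzWith_bump : LipschitzWith (3 / 4) bump := by
  refine LipschitzWith.of_dist_le_mul fun x y => ?_
  have h := (AddCircle.lipschitzWith_norm_coe 1).dist_le_mul (x - 3 / 8) (y - 3 / 8)
  simp only [NNReal.coe_one, one_mul, Real.dist_eq, sub_sub_sub_cancel_right] at h
  rw [Real.dist_eq, Real.dist_eq, bump, bump, ← mul_sub, sub_sub_sub_cancel_right, abs_mul,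
    abs_of_pos (by norm_num : (0 : ℝ) < 3 / 4), show ((3 / 4 : NNReal) : ℝ) = 3 / 4 by norm_num]
  gcongr

noncomputable def tent : CircleDeg1Lift :=
  addPeriodic bump periodic_bump lipschitzWith_bump (by norm_num)

theorem tent_apply {x : ℝ} (hx : |x - 3 / 8| ≤ 1 / 2) :
    tent x = x + 3 / 4 * (|x - 3 / 8| - 1 / 4) := by
  rw [tent, addPeriodic_apply, bump, (AddCircle.norm_coe_eq_abs_iff 1 one_ne_zero).2 (by norm_num; linarith)]

theorem tent_apply_of_mem_Icc {x : ℝ} (hx : x ∈ Icc (3 / 8) (7 / 8)) :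
    tent x = 5 / 8 + 7 / 4 * (x - 5 / 8) := by
  rw [tent_apply (abs_le.2 ⟨by linarith [hx.1], by linarith [hx.2]⟩),
    abs_of_nonneg (by linarith [hx.1])]
  ring

/- A commutator of lifts `x ↦ x + ψ x` moves points by at most the sum of the oscillations of
the two `ψ`, and a `1`-periodic contraction oscillates by less than `1/2`; hence the square. -/
noncomputable def expander : CircleDeg1Liftˣ :=
  (isUnit_addPeriodic bump periodic_bump lipschitzWith_bump (by norm_num)).unit ^ 2

theorem expander_apply (x : ℝ) : (expander : CircleDeg1Lift) x = tent (tent x) := by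
  rw [expander, Units.val_pow_eq_pow_val, IsUnit.unit_spec, sq, mul_apply]
  rfl

theorem expander_five_eighths : (expander : CircleDeg1Lift) (5 / 8) = 5 / 8 := by
  rw [expander_apply, tent_apply_of_mem_Icc (x := 5 / 8) (by norm_num)]
  norm_num [tent_apply_of_mem_Icc]

theorem expander_half : (expander : CircleDeg1Lift) (1 / 2) = 31 / 128 := by
  rw [expander_apply, tent_apply_of_mem_Icc (x := 1 / 2) (by norm_num)]
  norm_num [tent_apply_of_mem_Icc]

theorem expander_three_quarters : (expander : CircleDeg1Lift) (3 / 4) = 129 / 128 := by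
  rw [expander_apply, tent_apply_of_mem_Icc (x := 3 / 4) (by norm_num)]
  norm_num [tent_apply_of_mem_Icc]

noncomputable def shiftedExpander : CircleDeg1Liftˣ :=
  (translate (Multiplicative.ofAdd (1 / 4)))⁻¹ * expander * translate (Multiplicative.ofAdd (1 / 4))

theorem shiftedExpander_apply (x : ℝ) :
    (shiftedExpander : CircleDeg1Lift) x = expander (x + 1 / 4) - 1 / 4 := by
  simp only [shiftedExpander, Units.val_mul, mul_apply, translate_apply, translate_inv_apply]
  ring_nf

theorem shiftedExpander_inv_apply (x : ℝ) :
    (↑shiftedExpander⁻¹ : CircleDeg1Lift) x =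
      (↑expander⁻¹ : CircleDeg1Lift) (x + 1 / 4) - 1 / 4 := by
  simp only [shiftedExpander, mul_inv_rev, inv_inv, Units.val_mul, mul_apply, translate_apply,
    translate_inv_apply]
  ring_nf

theorem shiftedExpander_three_eighths : (shiftedExpander : CircleDeg1Lift) (3 / 8) = 3 / 8 := by
  rw [shiftedExpander_apply, show (3 / 8 : ℝ) + 1 / 4 = 5 / 8 by norm_num, expander_five_eighths]
  norm_num

noncomputable def rho : FreeGroup Bool →* CircleDeg1Liftˣ :=
  FreeGroup.lift fun b => if b then expander else shiftedExpander

theorem rho_of_true : rho (FreeGroup.of true) = expander := by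
  simp [rho]

theorem rho_of_false : rho (FreeGroup.of false) = shiftedExpander := by
  simp [rho]

theorem one_le_rho_commutator_apply_zero :
    1 ≤ (rho ⁅FreeGroup.of true, FreeGroup.of false⁆ : CircleDeg1Lift) 0 := by
  simp only [commutatorElement_def, map_mul, map_inv, rho_of_true, rho_of_false, Units.val_mul,
    mul_apply]
  set a : CircleDeg1Lift := ↑expander
  set a' : CircleDeg1Lift := ↑expander⁻¹
  set b : CircleDeg1Lift := ↑shiftedExpander
  set b' : CircleDeg1Lift := ↑shiftedExpander⁻¹
  have h1 : 1 / 2 ≤ a' (1 / 4) := (le_units_inv_apply_iff _).2 (by rw [expander_half]; norm_num)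
  have h2 : 1 / 4 ≤ b' 0 := by rw [shiftedExpander_inv_apply, zero_add]; linarith
  have h3 : 1 / 2 ≤ a' (b' 0) := h1.trans (a'.mono h2)
  have h4 : 3 / 4 ≤ b (a' (b' 0)) := by
    rw [shiftedExpander_apply]
    linarith [a.mono (by linarith : (3 / 4 : ℝ) ≤ a' (b' 0) + 1 / 4), expander_three_quarters]
  calc (1 : ℝ) ≤ a (3 / 4) := by rw [expander_three_quarters]; norm_num
    _ ≤ a (b (a' (b' 0))) := a.mono h4

local notation "𝒮" => ({FreeGroup.of true, (FreeGroup.of true)⁻¹, FreeGroup.of false,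
  (FreeGroup.of false)⁻¹} : Set (FreeGroup Bool))

theorem exists_rho_apply_eq_self : ∀ s ∈ 𝒮, ∃ x, (rho s : CircleDeg1Lift) x = x := by
  rintro s (rfl | rfl | rfl | rfl)
  · exact ⟨5 / 8, by rw [rho_of_true, expander_five_eighths]⟩
  · exact ⟨5 / 8, by
      rw [map_inv, rho_of_true]; exact units_inv_apply_eq_of_apply_eq _ expander_five_eighths⟩
  · exact ⟨3 / 8, by rw [rho_of_false, shiftedExpander_three_eighths]⟩
  · exact ⟨3 / 8, by
      rw [map_inv, rho_of_false]
      exact units_inv_apply_eq_of_apply_eq _ shiftedExpander_three_eighths⟩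

theorem lt_of_commutator_pow_mem_pow {k ℓ : ℕ} (hk : 1 ≤ k)
    (h : ⁅FreeGroup.of true, FreeGroup.of false⁆ ^ k ∈ conjugatesOfSet 𝒮 ^ ℓ) : k < ℓ := by
  have hc : (k : ℝ) ≤ (rho (⁅FreeGroup.of true, FreeGroup.of false⁆ ^ k) : CircleDeg1Lift) 0 := by
    rw [map_pow, Units.val_pow_eq_pow_val, coe_pow]
    simpa using le_iterate_of_add_int_le_map _ (x := 0) (m := 1)
      (by simpa using one_le_rho_commutator_apply_zero) k
  cases ℓ with
  | zero =>
    rw [pow_zero, Set.mem_one] at h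
    rw [h, map_one, Units.val_one, coe_one] at hc
    have : (k : ℝ) ≤ 0 := hc
    exact absurd this (by norm_cast; omega)
  | succ n => exact_mod_cast hc.trans_lt (map_zero_lt_of_mem_pow rho exists_rho_apply_eq_self h)

theorem even_of_commutator_pow_mem_pow {k ℓ : ℕ}
    (h : ⁅FreeGroup.of true, FreeGroup.of false⁆ ^ k ∈ conjugatesOfSet 𝒮 ^ ℓ) : Even ℓ := by
  set sign : FreeGroup Bool →* ℤˣ := FreeGroup.lift fun _ => -1
  have hS : ∀ s ∈ 𝒮, sign s = -1 := by
    rintro s (rfl | rfl | rfl | rfl) <;> simp [sign]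
  have hsign := map_eq_pow_of_mem_pow sign hS h
  rw [map_pow, show sign ⁅FreeGroup.of true, FreeGroup.of false⁆ = 1 by
    simp [sign, commutatorElement_def], one_pow] at hsign
  exact (neg_one_pow_eq_one_iff_even (by decide)).1 hsign.symm

theorem cinorm_commutator_pow {k : ℕ} (hk : 1 ≤ k) :
    cinorm 𝒮 (⁅FreeGroup.of true, FreeGroup.of false⁆ ^ k) = 2 * (k / 2) + 2 := by
  refine cinorm_eq_of_isLeast ⟨commutator_pow_mem_pow (by simp) (by simp) (by simp) (by simp) hk,
    fun ℓ hℓ => ?_⟩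
  obtain ⟨r, rfl⟩ := even_of_commutator_pow_mem_pow hℓ
  have := lt_of_commutator_pow_mem_pow hk hℓ
  omega

end CommutatorNorm

theorem tendsto_two_mul_div_two_add_two_div_atTop :
    Tendsto (fun k : ℕ => ((2 * (k / 2) + 2 : ℕ) : ℝ) / k) atTop (𝓝 1) := by
  have hup : Tendsto (fun k : ℕ => 1 + 2 / (k : ℝ)) atTop (𝓝 1) := by
    simpa using (tendsto_const_div_atTop_nhds_zero_nat 2).const_add (1 : ℝ)
  refine tendsto_of_tendsto_of_tendsto_of_le_of_le' tendsto_const_nhds hup ?_ ?_ <;>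
    filter_upwards [eventually_gt_atTop 0] with k hk
  · rw [le_div_iff₀ (by positivity), one_mul]
    exact_mod_cast (by omega : k ≤ 2 * (k / 2) + 2)
  · rw [div_le_iff₀ (by positivity), add_mul, one_mul, div_mul_cancel₀ _ (by positivity)]
    exact_mod_cast (by omega : 2 * (k / 2) + 2 ≤ k + 2)

theorem stmt_17 :
    (∀ k : ℕ, 1 ≤ k →
      cinorm ({FreeGroup.of true, (FreeGroup.of true)⁻¹,
               FreeGroup.of false, (FreeGroup.of false)⁻¹} : Set (FreeGroup Bool))
        ((FreeGroup.of true * FreeGroup.of false *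
          (FreeGroup.of true)⁻¹ * (FreeGroup.of false)⁻¹) ^ k)
        = 2 * (k / 2) + 2) ∧
    Filter.Tendsto (fun k : ℕ =>
      ((cinorm ({FreeGroup.of true, (FreeGroup.of true)⁻¹,
               FreeGroup.of false, (FreeGroup.of false)⁻¹} : Set (FreeGroup Bool))
        ((FreeGroup.of true * FreeGroup.of false *
          (FreeGroup.of true)⁻¹ * (FreeGroup.of false)⁻¹) ^ k) : ℝ) / (k : ℝ)))
      Filter.atTop (nhds 1) := by
  simp only [← commutatorElement_def]
  refine ⟨fun k hk => CommutatorNorm.cinorm_commutator_pow hk,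
    tendsto_two_mul_div_two_add_two_div_atTop.congr' ?_⟩
  filter_upwards [eventually_ge_atTop 1] with k hk
  rw [CommutatorNorm.cinorm_commutator_pow hk]
end

section
/- In the free group F = ⟨a, b⟩ with S = {a^{±1}, b^{±1}}, for all m, k ≥ 0 one has ‖(a^m b a^{-m})^k (b^{-1})^k‖_S = 2·min{m, k}; consequently the stable length lim_k ‖(a^m b a^{-m})^k b^{-k}‖_S / k equals 0. -/
/-!
A product of `ℓ` conjugates `h s h⁻¹` of letters is represented by the unreduced word
`H s H⁻¹ ⋯`, which becomes trivial after deleting `ℓ` letters (the conjugated ones). Being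
trivial after deleting `n` letters survives free reduction and its inverse, so it holds for every
word representing the same element, in particular for `w = a^m b^k a^{-m} b^{-k}`. A trivial
subword of `w` is `a^i b^j a^{-i} b^{-j}` by the exponent sums, and it is a nonempty reduced word
unless `i = 0` or `j = 0`; hence at least `2m + 2k - 2 max(m, k) = 2 min(m, k)` letters must be
deleted. The bound is attained by `k` conjugates of `b` followed by `k` copies of `b⁻¹`, or by
`m` copies of `a` followed by `m` conjugates of `a⁻¹`.
-/

open List

namespace FreeGroup

variable {α : Type*}

/-- `TrivialAfterDeleting n L` says that the cancellation length of the word `L` is at most `n`. -/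
def TrivialAfterDeleting (n : ℕ) (L : List (α × Bool)) : Prop :=
  ∃ T, T <+ L ∧ mk T = 1 ∧ L.length ≤ T.length + n

theorem mk_eq_one_iff_red_nil {L : List (α × Bool)} : mk L = 1 ↔ Red L [] := by
  rw [one_eq_mk, Red.exact]
  constructor
  · rintro ⟨c, hL, hc⟩
    rwa [Red.nil_iff.mp hc] at hL
  · exact fun h => ⟨[], h, Red.refl⟩

namespace TrivialAfterDeleting

variable {n : ℕ} {L L₁ L₂ : List (α × Bool)}

theorem append {m : ℕ} (h₁ : TrivialAfterDeleting m L₁) (h₂ : TrivialAfterDeleting n L₂) :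
    TrivialAfterDeleting (m + n) (L₁ ++ L₂) := by
  obtain ⟨T₁, hT₁, hm₁, hl₁⟩ := h₁
  obtain ⟨T₂, hT₂, hm₂, hl₂⟩ := h₂
  refine ⟨T₁ ++ T₂, hT₁.append hT₂, by rw [← mul_mk, hm₁, hm₂, one_mul], ?_⟩
  simp only [length_append]
  omega

theorem rotate (h : TrivialAfterDeleting n (L₁ ++ L₂)) : TrivialAfterDeleting n (L₂ ++ L₁) := by
  obtain ⟨T, hT, hm, hl⟩ := h
  obtain ⟨T₁, T₂, rfl, hT₁, hT₂⟩ := sublist_append_iff.mp hT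
  refine ⟨T₂ ++ T₁, hT₂.append hT₁, ?_, ?_⟩
  · rw [← mul_mk] at hm ⊢
    exact mul_eq_one_comm.mp hm
  · simp only [length_append] at hl ⊢
    omega

theorem of_sublist {m : ℕ} (h : TrivialAfterDeleting m L₁) (hs : L₁ <+ L₂)
    (hl : L₂.length + m ≤ L₁.length + n) : TrivialAfterDeleting n L₂ := by
  obtain ⟨T, hT, hm, hl'⟩ := h
  exact ⟨T, hT.trans hs, hm, by omega⟩

theorem of_step (hs : Red.Step L₁ L₂) (h : TrivialAfterDeleting n L₂) :
    TrivialAfterDeleting n L₁ := by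
  obtain @⟨U, V, x, b⟩ := hs
  obtain ⟨T, hT, hm, hl⟩ := h
  obtain ⟨T₁, T₂, rfl, hT₁, hT₂⟩ := sublist_append_iff.mp hT
  refine ⟨T₁ ++ (x, b) :: (x, !b) :: T₂, hT₁.append (hT₂.cons_cons _ |>.cons_cons _),
    (Quot.sound Red.Step.not).trans hm, ?_⟩
  simp only [length_append, length_cons] at hl ⊢
  omega

theorem of_red (hr : Red L₁ L₂) (h : TrivialAfterDeleting n L₂) : TrivialAfterDeleting n L₁ := by
  induction hr using Relation.ReflTransGen.head_induction_on with
  | refl => exact h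
  | head hs _ ih => exact of_step hs ih

-- `L` reduces to the single letter `y⁻¹`, and `[y⁻¹]` is trivial after deleting one letter.
theorem of_mk_cons_eq_one {y : α × Bool} (h : mk (y :: L) = 1) : TrivialAfterDeleting 1 L :=
  of_red (Red.cons_nil_iff_singleton.mp (mk_eq_one_iff_red_nil.mp h))
    ⟨[], nil_sublist _, rfl, le_rfl⟩

theorem of_mk_append_cons_eq_one {P Q : List (α × Bool)} {y : α × Bool}
    (h : mk (P ++ y :: Q) = 1) : TrivialAfterDeleting 1 (P ++ Q) := by
  refine rotate (of_mk_cons_eq_one (y := y) ?_)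
  rw [← cons_append, ← mul_mk]
  rw [← mul_mk] at h
  exact mul_eq_one_comm.mp h

theorem step (h : TrivialAfterDeleting n L₁) (hs : Red.Step L₁ L₂) :
    TrivialAfterDeleting n L₂ := by
  obtain @⟨U, V, x, b⟩ := hs
  obtain ⟨T, hT, hm, hl⟩ := h
  obtain ⟨T₁, T₂, rfl, hT₁, hT₂⟩ := sublist_append_iff.mp hT
  have hU := hT₁.length_le
  -- If exactly one letter of the cancelled pair survives in `T`, it is deleted from `T` too,
  -- at the cost of one further letter.
  rcases sublist_cons_iff.mp hT₂ with hT₂ | ⟨R, rfl, hR⟩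
  · rcases sublist_cons_iff.mp hT₂ with hT₂ | ⟨R, rfl, hR⟩
    · refine ⟨T₁ ++ T₂, hT₁.append hT₂, hm, ?_⟩
      simp only [length_append, length_cons] at hl ⊢
      omega
    · refine (of_mk_append_cons_eq_one hm).of_sublist (hT₁.append hR) ?_
      simp only [length_append, length_cons] at hl ⊢
      omega
  · rcases sublist_cons_iff.mp hR with hR' | ⟨R', rfl, hR'⟩
    · refine (of_mk_append_cons_eq_one hm).of_sublist (hT₁.append hR') ?_
      simp only [length_append, length_cons] at hl ⊢
      omega
    · refine ⟨T₁ ++ R', hT₁.append hR', (Quot.sound Red.Step.not).symm.trans hm, ?_⟩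
      simp only [length_append, length_cons] at hl ⊢
      omega

theorem red (h : TrivialAfterDeleting n L₁) (hr : Red L₁ L₂) : TrivialAfterDeleting n L₂ := by
  induction hr with
  | refl => exact h
  | tail _ hs ih => exact ih.step hs

theorem of_mk_eq (h : TrivialAfterDeleting n L₁) (he : mk L₁ = mk L₂) :
    TrivialAfterDeleting n L₂ :=
  let ⟨_, h₁, h₂⟩ := Red.exact.mp he
  of_red h₂ (h.red h₁)

end TrivialAfterDeleting

theorem exists_trivialAfterDeleting_of_forall_conj {S : Set (FreeGroup α)}
    (hS : ∀ s ∈ S, ∃ y, s = mk [y]) (l : List (FreeGroup α))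
    (hl : ∀ x ∈ l, ∃ h s, s ∈ S ∧ x = h * s * h⁻¹) :
    ∃ W, mk W = l.prod ∧ TrivialAfterDeleting l.length W := by
  induction l with
  | nil => exact ⟨[], rfl, [], Sublist.refl _, rfl, le_rfl⟩
  | cons x l ih =>
    obtain ⟨W, hW, hWl⟩ := ih fun z hz => hl z (mem_cons_of_mem _ hz)
    obtain ⟨h, s, hs, rfl⟩ := hl x mem_cons_self
    obtain ⟨y, rfl⟩ := hS s hs
    obtain ⟨H, rfl⟩ : ∃ H, mk H = h := Quot.exists_rep h
    have hconj : TrivialAfterDeleting 1 (H ++ y :: invRev H) :=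
      ⟨H ++ invRev H, (Sublist.refl H).append (sublist_cons_self _ _),
        by rw [← mul_mk, ← inv_mk, mul_inv_cancel],
        by simp only [length_append, length_cons, invRev_length]; omega⟩
    refine ⟨H ++ y :: invRev H ++ W, ?_, by simpa [add_comm] using hconj.append hWl⟩
    rw [prod_cons, ← hW, ← mul_mk, ← singleton_append, ← append_assoc, ← mul_mk, ← mul_mk,
      ← inv_mk]

theorem trivialAfterDeleting_of_eq_conj_prod {S : Set (FreeGroup α)}
    (hS : ∀ s ∈ S, ∃ y, s = mk [y]) {ℓ : ℕ} {f : Fin ℓ → FreeGroup α}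
    (hf : ∀ i, ∃ h s, s ∈ S ∧ f i = h * s * h⁻¹) {W : List (α × Bool)}
    (hW : mk W = (ofFn f).prod) : TrivialAfterDeleting ℓ W := by
  obtain ⟨W', hW', h⟩ := exists_trivialAfterDeleting_of_forall_conj hS (ofFn f)
    (by simpa [mem_ofFn] using fun i => hf i)
  rw [length_ofFn] at h
  exact h.of_mk_eq (hW'.trans hW.symm)

def commWord (a b : α) (i j i' j' : ℕ) : List (α × Bool) :=
  replicate i (a, true) ++ replicate j (b, true) ++ replicate i' (a, false) ++
    replicate j' (b, false)

section commWord

variable {a b : α} {i j i' j' : ℕ}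

theorem mk_replicate (n : ℕ) (y : α × Bool) : mk (replicate n y) = mk [y] ^ n := by
  rw [pow_mk, flatten_replicate_singleton]

theorem mk_commWord :
    mk (commWord a b i j i' j') = of a ^ i * of b ^ j * (of a)⁻¹ ^ i' * (of b)⁻¹ ^ j' := by
  simp only [commWord, ← mul_mk, mk_replicate, of, inv_mk, invRev, reverse_singleton,
    map_singleton]
  rfl

theorem length_commWord : (commWord a b i j i' j').length = i + j + i' + j' := by
  simp [commWord, add_assoc]

theorem exists_eq_commWord_of_sublist {T : List (α × Bool)} (h : T <+ commWord a b i j i' j') :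
    ∃ i₁ ≤ i, ∃ j₁ ≤ j, ∃ i₂ ≤ i', ∃ j₂ ≤ j', T = commWord a b i₁ j₁ i₂ j₂ := by
  simp only [commWord, sublist_append_iff, sublist_replicate_iff] at h
  obtain ⟨_, _, rfl, ⟨_, _, rfl, ⟨_, _, rfl, ⟨i₁, hi₁, rfl⟩, ⟨j₁, hj₁, rfl⟩⟩, ⟨i₂, hi₂, rfl⟩⟩,
    ⟨j₂, hj₂, rfl⟩⟩ := h
  exact ⟨i₁, hi₁, j₁, hj₁, i₂, hi₂, j₂, hj₂, by simp [commWord]⟩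

theorem isReduced_commWord (hab : a ≠ b) (hj : j ≠ 0) (hi' : i' ≠ 0) :
    IsReduced (commWord a b i j i' j') := by
  simp [IsReduced, commWord, isChain_append, isChain_replicate_of_rel, getLast?_replicate,
    head?_replicate, hab, hab.symm, hj, hi']

theorem eq_of_mk_commWord_eq_one (hab : a ≠ b) (h : mk (commWord a b i j i' j') = 1) :
    i = i' ∧ j = j' := by
  classical
  let count (c : α) : FreeGroup α →* Multiplicative ℤ :=
    FreeGroup.lift fun x => if x = c then Multiplicative.ofAdd 1 else 1
  rw [mk_commWord] at h
  have ha := congrArg (fun g => Multiplicative.toAdd (count a g)) h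
  have hb := congrArg (fun g => Multiplicative.toAdd (count b g)) h
  simp only [count, inv_pow, _root_.map_mul, map_pow, _root_.map_inv, _root_.map_one,
    lift_apply_of, ↓reduceIte, hab, hab.symm, one_pow, mul_one, one_mul, inv_one, toAdd_mul,
    toAdd_pow, toAdd_ofAdd, toAdd_inv, toAdd_one, Int.nsmul_eq_mul] at ha hb
  omega

theorem length_le_of_sublist_commWord (hab : a ≠ b) {T : List (α × Bool)}
    (hT : T <+ commWord a b i j i j) (h : mk T = 1) : T.length ≤ 2 * max i j := by
  obtain ⟨i₁, hi₁, j₁, hj₁, i₂, -, j₂, -, rfl⟩ := exists_eq_commWord_of_sublist hT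
  obtain ⟨rfl, rfl⟩ := eq_of_mk_commWord_eq_one hab h
  have : i₁ = 0 ∨ j₁ = 0 := by
    by_contra! hne
    have hnil := (isReduced_commWord hab hne.2 hne.1).red_iff_eq.mp (mk_eq_one_iff_red_nil.mp h)
    have := congrArg length hnil
    rw [length_nil, length_commWord] at this
    omega
  rw [length_commWord]
  omega

theorem TrivialAfterDeleting.two_mul_min_le (hab : a ≠ b) {n : ℕ}
    (h : TrivialAfterDeleting n (commWord a b i j i j)) : 2 * min i j ≤ n := by
  obtain ⟨T, hT, hm, hl⟩ := h
  have := length_le_of_sublist_commWord hab hT hm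
  rw [length_commWord] at hl
  omega

end commWord

section cinorm

variable {G : Type*} [Group G] {S : Set G}

def conjLengths (S : Set G) (g : G) : Set ℕ :=
  {ℓ : ℕ | ∃ f : Fin ℓ → G, (∀ i, ∃ h s, s ∈ S ∧ f i = h * s * h⁻¹) ∧ (List.ofFn f).prod = g}

theorem cinorm_eq_sInf (g : G) : cinorm S g = sInf (conjLengths S g) := rfl

theorem length_mem_conjLengths (l : List G) (hl : ∀ x ∈ l, ∃ h s, s ∈ S ∧ x = h * s * h⁻¹) :
    l.length ∈ conjLengths S l.prod :=
  ⟨l.get, fun i => hl _ (get_mem l i), by rw [ofFn_get]⟩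

theorem add_mem_conjLengths_pow_mul_pow {x y : G} (hx : ∃ h s, s ∈ S ∧ x = h * s * h⁻¹)
    (hy : ∃ h s, s ∈ S ∧ y = h * s * h⁻¹) (p q : ℕ) :
    p + q ∈ conjLengths S (x ^ p * y ^ q) := by
  simpa [prod_replicate] using length_mem_conjLengths (replicate p x ++ replicate q y)
    (fun z hz => by
      rcases mem_append.mp hz with hz | hz <;> rw [eq_of_mem_replicate hz] <;> assumption)

theorem add_mem_conjLengths_conj_pow_mul_inv_pow_of_right {x y : G} (hy : y ∈ S)
    (hy' : y⁻¹ ∈ S) (m k : ℕ) :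
    k + k ∈ conjLengths S ((x ^ m * y * x⁻¹ ^ m) ^ k * y⁻¹ ^ k) :=
  add_mem_conjLengths_pow_mul_pow ⟨x ^ m, y, hy, by rw [inv_pow]⟩ ⟨1, y⁻¹, hy', by simp⟩ k k

theorem add_mem_conjLengths_conj_pow_mul_inv_pow_of_left {x y : G} (hx : x ∈ S)
    (hx' : x⁻¹ ∈ S) (m k : ℕ) :
    m + m ∈ conjLengths S ((x ^ m * y * x⁻¹ ^ m) ^ k * y⁻¹ ^ k) := by
  convert add_mem_conjLengths_pow_mul_pow (x := x) (y := y ^ k * x⁻¹ * (y ^ k)⁻¹)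
    ⟨1, x, hx, by simp⟩ ⟨y ^ k, x⁻¹, hx', rfl⟩ m m using 2
  simp only [conj_pow, inv_pow]
  group

end cinorm

theorem mk_commWord_self (a b : α) (m k : ℕ) :
    mk (commWord a b m k m k) = (of a ^ m * of b * (of a)⁻¹ ^ m) ^ k * (of b)⁻¹ ^ k := by
  rw [mk_commWord, inv_pow (of a), conj_pow]

theorem cinorm_conj_pow_mul_inv_pow {a b : α} (hab : a ≠ b) (m k : ℕ) :
    cinorm ({of a, (of a)⁻¹, of b, (of b)⁻¹} : Set (FreeGroup α))
      ((of a ^ m * of b * (of a)⁻¹ ^ m) ^ k * (of b)⁻¹ ^ k) = 2 * min m k := by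
  set S : Set (FreeGroup α) := {of a, (of a)⁻¹, of b, (of b)⁻¹}
  have hS : ∀ s ∈ S, ∃ y, s = mk [y] := by
    rintro s (rfl | rfl | rfl | rfl) <;> exact ⟨_, rfl⟩
  have hk := add_mem_conjLengths_conj_pow_mul_inv_pow_of_right (S := S) (x := of a) (y := of b)
    (by simp [S]) (by simp [S]) m k
  have hm := add_mem_conjLengths_conj_pow_mul_inv_pow_of_left (S := S) (x := of a) (y := of b)
    (by simp [S]) (by simp [S]) m k
  obtain ⟨f, hf, hprod⟩ := Nat.sInf_mem ⟨_, hk⟩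
  have hlower := (trivialAfterDeleting_of_eq_conj_prod hS hf
    ((mk_commWord_self a b m k).trans hprod.symm)).two_mul_min_le hab
  have := Nat.sInf_le hk
  have := Nat.sInf_le hm
  rw [cinorm_eq_sInf]
  omega

end FreeGroup

theorem tendsto_two_mul_min_div_atTop (m : ℕ) :
    Filter.Tendsto (fun k : ℕ => ((2 * min m k : ℕ) : ℝ) / k) Filter.atTop (nhds 0) := by
  refine (tendsto_const_div_atTop_nhds_zero_nat (2 * m : ℝ)).congr' ?_
  filter_upwards [Filter.eventually_ge_atTop m] with k hk
  rw [min_eq_left hk]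
  push_cast
  rfl

theorem stmt_18 :
    (∀ m k : ℕ,
      cinorm ({FreeGroup.of true, (FreeGroup.of true)⁻¹,
               FreeGroup.of false, (FreeGroup.of false)⁻¹} : Set (FreeGroup Bool))
        ((FreeGroup.of true ^ m * FreeGroup.of false * (FreeGroup.of true)⁻¹ ^ m) ^ k *
          ((FreeGroup.of false)⁻¹) ^ k)
        = 2 * min m k) ∧
    ∀ m : ℕ, Filter.Tendsto (fun k : ℕ =>
      ((cinorm ({FreeGroup.of true, (FreeGroup.of true)⁻¹,
               FreeGroup.of false, (FreeGroup.of false)⁻¹} : Set (FreeGroup Bool))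
        ((FreeGroup.of true ^ m * FreeGroup.of false * (FreeGroup.of true)⁻¹ ^ m) ^ k *
          ((FreeGroup.of false)⁻¹) ^ k) : ℝ) / (k : ℝ)))
      Filter.atTop (nhds 0) := by
  have h := FreeGroup.cinorm_conj_pow_mul_inv_pow (a := true) (b := false) (by decide)
  refine ⟨h, fun m => ?_⟩
  simp only [h]
  exact tendsto_two_mul_min_div_atTop m
end

section
/- Let G be a group normally generated by a finite set S, and suppose that for words w_1, ..., w_n representing g_1, ..., g_n ∈ G, the sequence (‖g_1^k ⋯ g_n^k‖_S)_k is eventually finite and uniformly semi-arithmetic with period m > 0 and difference d ≥ 0. Then the stable length τ_S(g_1, ..., g_n) = lim_k ‖g_1^k ⋯ g_n^k‖_S / k exists and equals d/m, a rational number. -/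
set_option maxHeartbeats 800000

theorem stmt_19 {G : Type*} [Group G] (S : Finset G)
    (hgen : Subgroup.normalClosure (S : Set G) = ⊤)
    (n : ℕ) (g : Fin n → G) (m d : ℕ) (hm : 0 < m)
    (husa : ∀ r : ℕ, ∃ N : ℕ, ∀ k ≥ N,
      cinorm (S : Set G) (List.ofFn (fun i => g i ^ (m * (k + 1) + r))).prod =
        cinorm (S : Set G) (List.ofFn (fun i => g i ^ (m * k + r))).prod + d) :
    Filter.Tendsto (fun k : ℕ =>
      ((cinorm (S : Set G) (List.ofFn (fun i => g i ^ k)).prod : ℝ) / (k : ℝ)))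
      Filter.atTop (nhds ((d : ℝ) / (m : ℝ))) := by
  set F : ℕ → ℕ := fun k => cinorm (S : Set G) (List.ofFn (fun i => g i ^ k)).prod with hF
  choose N hN using husa
  have key : ∀ r k, N r ≤ k → F (m * k + r) = F (m * N r + r) + d * (k - N r) := by
    intro r k hk
    induction k, hk using Nat.le_induction with
    | base => simp
    | succ k hk ih =>
      have e : F (m * (k + 1) + r) = F (m * k + r) + d := hN r k hk
      rw [e, ih, Nat.succ_sub hk, Nat.mul_succ, add_assoc]
  set N₀ : ℕ := (Finset.range m).sup N with hN₀
  set B : ℕ := (Finset.range m).sup (fun r => F (m * N r + r)) with hB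
  set C : ℝ := ((m * B + d * m * N₀ + d * m : ℕ) : ℝ) with hC
  have hbound : ∀ k : ℕ, m * (N₀ + 1) ≤ k → ‖(F k : ℝ) / k - (d : ℝ) / m‖ ≤ C / k := by
    intro k hk
    have hkpos : 0 < k := lt_of_lt_of_le (by positivity) hk
    set r := k % m with hr'
    set q := k / m with hq'
    have hr : r < m := Nat.mod_lt _ hm
    have hkeq : k = m * q + r := (Nat.div_add_mod k m).symm
    have hq : N₀ ≤ q := Nat.le_div_iff_mul_le hm |>.mpr (by nlinarith)
    have hNr : N r ≤ q :=
      le_trans (Finset.le_sup (Finset.mem_range.mpr hr)) hq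
    have hFk : F k = F (m * N r + r) + d * (q - N r) := by
      rw [hkeq]; exact key r q hNr
    have hFB : F (m * N r + r) ≤ B := Finset.le_sup (f := fun r => F (m * N r + r))
      (Finset.mem_range.mpr hr)
    have hNrN₀ : N r ≤ N₀ := Finset.le_sup (Finset.mem_range.mpr hr)
    have habs : |(F k : ℝ) * m - d * k| ≤ C := by
      rw [hFk, hkeq, hC]
      push_cast [Nat.cast_sub hNr]
      rw [abs_le]
      have h1 : (F (m * N r + r) : ℝ) ≤ B := Nat.cast_le.mpr hFB
      have h2 : (N r : ℝ) ≤ N₀ := Nat.cast_le.mpr hNrN₀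
      have h3 : (r : ℝ) ≤ m := Nat.cast_le.mpr hr.le
      have h4 : (0:ℝ) ≤ F (m * N r + r) := Nat.cast_nonneg _
      have h5 : (0:ℝ) ≤ d := Nat.cast_nonneg _
      have h6 : (0:ℝ) ≤ N r := Nat.cast_nonneg _
      have h7 : (0:ℝ) ≤ r := Nat.cast_nonneg _
      have h8 : (0:ℝ) ≤ m := Nat.cast_nonneg _
      have h9 : (0:ℝ) ≤ B := Nat.cast_nonneg _
      have h10 : (0:ℝ) ≤ N₀ := Nat.cast_nonneg _
      have e1 : (d:ℝ) * N r * m ≤ d * N₀ * m :=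
        mul_le_mul_of_nonneg_right (mul_le_mul_of_nonneg_left h2 h5) h8
      have e2 : (d:ℝ) * r ≤ d * m := mul_le_mul_of_nonneg_left h3 h5
      have e3 : (F (m * N r + r) : ℝ) * m ≤ B * m := mul_le_mul_of_nonneg_right h1 h8
      have e4 : (0:ℝ) ≤ (F (m * N r + r) : ℝ) * m := mul_nonneg h4 h8
      have e5 : (0:ℝ) ≤ (d:ℝ) * N r * m := by positivity
      have e6 : (0:ℝ) ≤ (d:ℝ) * r := by positivity
      constructor <;> nlinarith [e1, e2, e3, e4, e5, e6]
    have hmR : (0:ℝ) < m := by exact_mod_cast hm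
    have hkR : (0:ℝ) < k := by exact_mod_cast hkpos
    have heq : (F k : ℝ) / k - (d : ℝ) / m = ((F k : ℝ) * m - d * k) / (m * k) := by
      field_simp
    rw [Real.norm_eq_abs, heq, abs_div, abs_of_pos (mul_pos hmR hkR)]
    have hC0 : 0 ≤ C := Nat.cast_nonneg _
    exact div_le_div₀ hC0 habs hkR (le_mul_of_one_le_left hkR.le (by exact_mod_cast hm))
  have h0 : Filter.Tendsto (fun k : ℕ => (F k : ℝ) / k - (d : ℝ) / m)
      Filter.atTop (nhds 0) := by
    refine squeeze_zero_norm' ?_ (tendsto_const_div_atTop_nhds_zero_nat C)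
    filter_upwards [Filter.eventually_ge_atTop (m * (N₀ + 1))] with k hk
    exact hbound k hk
  have h1 := h0.add_const ((d : ℝ) / m)
  simp only [sub_add_cancel, zero_add] at h1
  exact h1
end
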